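/- Under Assumption 2.2 and the condition σ/(4eβ) ≤ C₁ ≤ (1/2)·max{σ/β, 1/4}, the mesh step size of the mesh generated by φ satisfies the exact identity h_{N/4−2} = (σ/β)·ε·ln 2; in particular (σ/(4β))·ε ≤ h_{N/4−2} ≤ (σ/β)·ε. -/
import Mathlib


/-- The Bakhvalov-type mesh generating function of Kopteva, with transition
parameter `ϑ = 1/4 - C₁ ε`. -/
noncomputable def phi (β σ ε C₁ : ℝ) (t : ℝ) : ℝ :=
  if t ≤ 1/4 - C₁ * ε then -(σ * ε / β) * Real.log (1 - 4 * t)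
  else if t < 1 - (1/4 - C₁ * ε) then
    ((1 + (σ * ε / β) * Real.log (4 * C₁ * ε)) / (1 - 2 * (1/4 - C₁ * ε)))
        * (t - (1/4 - C₁ * ε))
      + ((σ * ε / β) * Real.log (4 * C₁ * ε) / (1 - 2 * (1/4 - C₁ * ε)))
        * (t - (1 - (1/4 - C₁ * ε)))
  else 1 + (σ * ε / β) * Real.log (1 - 4 * (1 - t))

/-- Mesh points `x_i = φ(i/N)`. -/
noncomputable def meshXK (β σ ε C₁ : ℝ) (N i : ℕ) : ℝ := phi β σ ε C₁ ((i : ℝ) / (N : ℝ))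

/-- Mesh step sizes `h_i = x_{i+1} - x_i`. -/
noncomputable def meshHK (β σ ε C₁ : ℝ) (N i : ℕ) : ℝ :=
  meshXK β σ ε C₁ N (i + 1) - meshXK β σ ε C₁ N i

set_option maxHeartbeats 1000000 in
theorem stmt_12 (β σ ε C₁ : ℝ) (N : ℕ)
    (hβ : 0 < β) (hσ : 0 < σ) (hε0 : 0 < ε) (hε1 : ε < 1)
    (hN4 : 4 ∣ N) (hN : max 8 (2 * Real.log (σ / β)) ≤ (N : ℝ))
    (hεN : ε ≤ min (β / (4 * σ)) 1 * (N : ℝ)⁻¹)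
    (hC₁l : σ / (4 * Real.exp 1 * β) ≤ C₁)
    (hC₁u : C₁ ≤ 1 / 2 * max (σ / β) (1 / 4)) :
    meshHK β σ ε C₁ N (N / 4 - 2) = σ / β * ε * Real.log 2 ∧
    σ / (4 * β) * ε ≤ meshHK β σ ε C₁ N (N / 4 - 2) ∧
    meshHK β σ ε C₁ N (N / 4 - 2) ≤ σ / β * ε := by
  obtain ⟨k, rfl⟩ := hN4
  have hN8 : (8 : ℝ) ≤ (4 * k : ℕ) := le_trans (le_max_left _ _) hN
  have hk2 : 2 ≤ k := by
    by_contra h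
    push_cast at hN8
    have : (k:ℝ) < 2 := by exact_mod_cast not_le.mp h
    linarith
  have hkR : (2 : ℝ) ≤ (k : ℝ) := by exact_mod_cast hk2
  have hk0 : (0 : ℝ) < (k : ℝ) := by linarith
  have hkne : (k : ℝ) ≠ 0 := ne_of_gt hk0
  have hNR : (0:ℝ) < (4*k:ℕ) := by positivity
  have hC₁0 : 0 < C₁ := lt_of_lt_of_le (by positivity) hC₁l
  have hmm : max (σ / β) (1 / 4) * min (β / (4 * σ)) 1 ≤ 1 / 4 := by
    rcases le_or_gt (1/4 : ℝ) (σ / β) with h | h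
    · have h1 : max (σ / β) (1 / 4) = σ / β := max_eq_left h
      have h2 : min (β / (4 * σ)) 1 = β / (4 * σ) := by
        apply min_eq_left
        rw [div_le_one (by positivity)]
        rw [le_div_iff₀ hβ] at h
        linarith
      rw [h1, h2]
      rw [div_mul_div_comm, div_le_div_iff₀ (by positivity) (by norm_num)]
      ring_nf
      nlinarith
    · have h1 : max (σ / β) (1 / 4) = 1/4 := max_eq_right h.le
      have h2 : min (β / (4 * σ)) 1 ≤ 1 := min_le_right _ _
      rw [h1]
      nlinarith
  have hCε : C₁ * ε ≤ 1 / (4 * (4 * k : ℕ)) := by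
    have h1 : C₁ * ε ≤ (1 / 2 * max (σ / β) (1 / 4)) * (min (β / (4 * σ)) 1 * ((4*k:ℕ) : ℝ)⁻¹) := by
      apply mul_le_mul hC₁u hεN hε0.le
      have : (0:ℝ) < max (σ / β) (1/4) := lt_of_lt_of_le (by norm_num) (le_max_right _ _)
      positivity
    calc C₁ * ε ≤ _ := h1
      _ = max (σ / β) (1 / 4) * min (β / (4 * σ)) 1 * (1/2 * ((4*k:ℕ):ℝ)⁻¹) := by ring
      _ ≤ (1/4) * (1/2 * ((4*k:ℕ):ℝ)⁻¹) := by
          apply mul_le_mul_of_nonneg_right hmm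
          positivity
      _ ≤ 1 / (4 * (4 * k : ℕ)) := by
          have heq : 1/(4*((4*k:ℕ):ℝ)) = 1/4 * (((4*k:ℕ)):ℝ)⁻¹ := by
            rw [one_div, mul_inv, one_div]
          rw [heq]
          have hxinv : (0:ℝ) < (((4*k:ℕ)):ℝ)⁻¹ := by positivity
          nlinarith
  -- simplify index
  have hdiv : 4 * k / 4 = k := by omega
  have hi1 : k - 2 + 1 = k - 1 := by omega
  have hc1 : ((k - 2 : ℕ) : ℝ) = (k : ℝ) - 2 := by
    have := Nat.cast_sub hk2 (R := ℝ)
    push_cast [this]; ring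
  have hc2 : ((k - 1 : ℕ) : ℝ) = (k : ℝ) - 1 := by
    have := Nat.cast_sub (by omega : 1 ≤ k) (R := ℝ)
    push_cast [this]; ring
  have hNc : ((4 * k : ℕ) : ℝ) = 4 * (k : ℝ) := by push_cast; ring
  have hCε' : C₁ * ε ≤ 1 / (4 * (4 * (k:ℝ))) := by rwa [hNc] at hCε
  -- the two mesh points lie in the first region
  have hmul : C₁ * ε * (4 * (k:ℝ)) ≤ 1/4 := by
    have h := mul_le_mul_of_nonneg_right hCε' (by positivity : (0:ℝ) ≤ 4*(k:ℝ))
    have heq : 1 / (4 * (4 * (k:ℝ))) * (4*(k:ℝ)) = 1/4 := by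
      field_simp
    linarith [heq ▸ h]
  have ht1 : ((k - 2 : ℕ) : ℝ) / ((4 * k : ℕ) : ℝ) ≤ 1/4 - C₁ * ε := by
    rw [hc1, hNc, div_le_iff₀ (by positivity)]
    have hexp : (1/4 - C₁*ε) * (4*(k:ℝ)) = (k:ℝ) - C₁ * ε * (4*(k:ℝ)) := by ring
    rw [hexp]; linarith
  have ht2 : ((k - 1 : ℕ) : ℝ) / ((4 * k : ℕ) : ℝ) ≤ 1/4 - C₁ * ε := by
    rw [hc2, hNc, div_le_iff₀ (by positivity)]
    have hexp : (1/4 - C₁*ε) * (4*(k:ℝ)) = (k:ℝ) - C₁ * ε * (4*(k:ℝ)) := by ring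
    rw [hexp]; linarith
  have key : meshHK β σ ε C₁ (4 * k) (4 * k / 4 - 2) = σ / β * ε * Real.log 2 := by
    rw [hdiv]
    unfold meshHK meshXK phi
    rw [hi1, if_pos ht2, if_pos ht1]
    have e1 : 1 - 4 * (((k - 1 : ℕ) : ℝ) / ((4 * k : ℕ) : ℝ)) = ((k:ℝ))⁻¹ := by
      rw [hc2, hNc]
      rw [eq_comm, inv_eq_iff_eq_inv, eq_comm, inv_eq_one_div]
      field_simp
      ring
    have e2 : 1 - 4 * (((k - 2 : ℕ) : ℝ) / ((4 * k : ℕ) : ℝ)) = 2 * ((k:ℝ))⁻¹ := by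
      rw [hc1, hNc]
      have hk' : (k:ℝ) * (k:ℝ)⁻¹ = 1 := mul_inv_cancel₀ hkne
      linear_combination -hk'
    rw [e1, e2, Real.log_mul two_ne_zero (inv_ne_zero hkne)]
    ring
  refine ⟨key, ?_, ?_⟩
  · rw [key]
    have h2 : (0.6931471803 : ℝ) < Real.log 2 := Real.log_two_gt_d9
    have hpos : (0:ℝ) < σ / β * ε := by positivity
    have heq : σ / (4*β) * ε = σ / β * ε * (1/4) := by
      field_simp
    rw [heq]
    nlinarith [mul_pos hpos (by linarith : (0:ℝ) < Real.log 2 - 0.6931471803)]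
  · rw [key]
    have h2 : Real.log 2 < 0.6931471808 := Real.log_two_lt_d9
    have hpos : (0:ℝ) < σ / β * ε := by positivity
    nlinarith [mul_le_mul_of_nonneg_left h2.le hpos.le]
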